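/- For r >= 2 and k >= 1, the balanced complete r-partite graph K_{k,...,k} (with all r parts of size k) is uniquely B_{(r-1)k}-saturated and contains no copy of B_{(r-2)k+1}. -/

import Mathlib

/-!
The pages of a copy of `B_p` with spine `ab` are common neighbours of `a` and `b`. In
`K_{k,…,k}` adjacent vertices have exactly `(r-2)k` common neighbours, which excludes
`B_{(r-2)k+1}` and hence `B_{(r-1)k}`. A non-edge `uv` joins two vertices of one part (so
`k ≥ 2`), and adding it gives any pair at most one new common neighbour; so after adding it a
pair other than `uv` has at most `(r-2)k+1 < (r-1)k` common neighbours, forcing every copy of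
`B_{(r-1)k}` to have spine `uv`. As `u` and `v` have exactly `(r-1)k` common neighbours, the pages
are all of them and the copy is unique.
-/

open SimpleGraph

/-- The diamond graph `C₄⁺`: a `4`-cycle with one chord, i.e. `K₄` minus an edge. -/
def diamond : SimpleGraph (Fin 4) := (⊤ : SimpleGraph (Fin 4)).deleteEdges {s(0, 1)}

/-- `G'` is a copy of `H` in `G`, i.e. a subgraph of `G` isomorphic to `H`. -/
def IsCopy {W V : Type*} (H : SimpleGraph W) {G : SimpleGraph V} (G' : G.Subgraph) : Prop :=
  Nonempty (G'.coe ≃g H)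

/-- `G` is uniquely `H`-saturated: `G` is `H`-free, and adding any non-edge
creates exactly one copy of `H`. -/
def UniquelySaturated {W V : Type*} (H : SimpleGraph W) (G : SimpleGraph V) : Prop :=
  (∀ G' : G.Subgraph, ¬ IsCopy H G') ∧
    ∀ u v : V, u ≠ v → ¬ G.Adj u v →
      ∃! G' : (G ⊔ SimpleGraph.fromEdgeSet {s(u, v)}).Subgraph, IsCopy H G'

/-- The book graph `B_p`: `p` triangles sharing a common edge. The common (rootlet)
edge joins vertices `0` and `1`, and the `p` page vertices are joined to both. -/
def book (p : ℕ) : SimpleGraph (Fin (p + 2)) :=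
  SimpleGraph.fromRel fun u v => u.val < 2 ∨ v.val < 2

lemma book_adj_iff {p : ℕ} {i j : Fin (p + 2)} :
    (book p).Adj i j ↔ i ≠ j ∧ (i = 0 ∨ i = 1 ∨ j = 0 ∨ j = 1) := by
  have h (i : Fin (p + 2)) : i.val < 2 ↔ i = 0 ∨ i = 1 := by
    simp only [Fin.ext_iff, Fin.val_zero, Fin.val_one]; omega
  rw [book, fromRel_adj, h, h]
  tauto

lemma book_adj_apply_iff {W : Type*} {p : ℕ} (g : W ≃ Fin (p + 2)) (x y : W) :
    (book p).Adj (g x) (g y) ↔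
      x ≠ y ∧ (x = g.symm 0 ∨ x = g.symm 1 ∨ y = g.symm 0 ∨ y = g.symm 1) := by
  simp only [book_adj_iff, g.injective.ne_iff, ← g.eq_symm_apply]

lemma nonempty_iso_book_iff {W : Type*} (X : SimpleGraph W) (p : ℕ) :
    Nonempty (X ≃g book p) ↔ Nat.card W = p + 2 ∧
      ∃ a b, a ≠ b ∧ ∀ x y, X.Adj x y ↔ x ≠ y ∧ (x = a ∨ x = b ∨ y = a ∨ y = b) := by
  constructor
  · rintro ⟨e⟩
    refine ⟨by simp [Nat.card_congr e.toEquiv], e.symm 0, e.symm 1,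
      e.symm.injective.ne (by simp), fun x y => ?_⟩
    rw [← e.map_adj_iff]
    exact book_adj_apply_iff e.toEquiv x y
  · rintro ⟨hcard, a, b, hab, hadj⟩
    have : Finite W := Nat.finite_of_card_ne_zero (by omega)
    let f : W ≃ Fin (p + 2) := (Finite.equivFin W).trans (finCongr hcard)
    let f₀ : W ≃ Fin (p + 2) := f.trans (Equiv.swap (f a) 0)
    let g : W ≃ Fin (p + 2) := f₀.trans (Equiv.swap (f₀ b) 1)
    have hf₀a : f₀ a = 0 := by simp [f₀]
    have hga : g a = 0 := by
      have : f₀ b ≠ 0 := hf₀a ▸ f₀.injective.ne hab.symm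
      simp only [g, Equiv.trans_apply, hf₀a]
      exact Equiv.swap_apply_of_ne_of_ne this.symm zero_ne_one
    have hgb : g b = 1 := by simp [g]
    refine ⟨⟨g, fun {x y} => ?_⟩⟩
    rw [book_adj_apply_iff, hadj, ← hga, ← hgb, g.symm_apply_apply, g.symm_apply_apply]

section BookSubgraph

variable {V : Type*} {G : SimpleGraph V} {a b a' b' : V} {S S' : Set V}

def bookSubgraph (hab : G.Adj a b) (hS : S ⊆ G.commonNeighbors a b) : G.Subgraph where
  verts := insert a (insert b S)
  Adj x y := x ≠ y ∧ x ∈ insert a (insert b S) ∧ y ∈ insert a (insert b S) ∧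
    (x = a ∨ x = b ∨ y = a ∨ y = b)
  adj_sub := by
    have ha : ∀ z ∈ insert a (insert b S), z ≠ a → G.Adj a z := by
      rintro z (rfl | rfl | hz) hza
      exacts [absurd rfl hza, hab, (hS hz).1]
    have hb : ∀ z ∈ insert a (insert b S), z ≠ b → G.Adj b z := by
      rintro z (rfl | rfl | hz) hzb
      exacts [hab.symm, absurd rfl hzb, (hS hz).2]
    rintro x y ⟨hxy, hx, hy, rfl | rfl | rfl | rfl⟩
    exacts [ha y hy hxy.symm, hb y hy hxy.symm, (ha x hx hxy).symm, (hb x hx hxy).symm]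
  edge_vert h := h.2.1
  symm := ⟨fun _ _ ⟨hxy, hx, hy, h⟩ => ⟨hxy.symm, hy, hx, by tauto⟩⟩

@[simp]
lemma bookSubgraph_verts (hab : G.Adj a b) (hS : S ⊆ G.commonNeighbors a b) :
    (bookSubgraph hab hS).verts = insert a (insert b S) := rfl

lemma bookSubgraph_congr {hab : G.Adj a b} {hS : S ⊆ G.commonNeighbors a b}
    {hab' : G.Adj a' b'} {hS' : S' ⊆ G.commonNeighbors a' b'}
    (h : s(a, b) = s(a', b')) (hSS' : S = S') :
    bookSubgraph hab hS = bookSubgraph hab' hS' := by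
  subst hSS'
  rcases Sym2.eq_iff.mp h with ⟨rfl, rfl⟩ | ⟨rfl, rfl⟩
  · rfl
  · ext
    · simp only [bookSubgraph_verts, Set.insert_comm a b]
    · simp only [bookSubgraph, Set.insert_comm a b]
      tauto

lemma exists_eq_bookSubgraph {H : G.Subgraph} (ha : a ∈ H.verts) (hb : b ∈ H.verts)
    (hne : a ≠ b) (hadj : ∀ x ∈ H.verts, ∀ y ∈ H.verts,
      (H.Adj x y ↔ x ≠ y ∧ (x = a ∨ x = b ∨ y = a ∨ y = b))) :
    ∃ (hab : G.Adj a b) (hS : H.verts \ {a, b} ⊆ G.commonNeighbors a b),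
      H = bookSubgraph hab hS := by
  have hab : H.Adj a b := (hadj a ha b hb).mpr ⟨hne, Or.inl rfl⟩
  refine ⟨H.adj_sub hab, ?_, ?_⟩
  · rintro x ⟨hx, hxab⟩
    simp only [Set.mem_insert_iff, Set.mem_singleton_iff, not_or] at hxab
    exact ⟨H.adj_sub ((hadj a ha x hx).mpr ⟨Ne.symm hxab.1, Or.inl rfl⟩),
      H.adj_sub ((hadj b hb x hx).mpr ⟨Ne.symm hxab.2, Or.inr (Or.inl rfl)⟩)⟩
  · have hverts : H.verts = insert a (insert b (H.verts \ {a, b})) := by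
      ext x; by_cases x = a <;> by_cases x = b <;> simp_all
    ext x y
    · exact Set.ext_iff.mp hverts x
    · simp only [bookSubgraph, ← hverts]
      constructor
      · intro h
        have hx := H.edge_vert h
        have hy := H.edge_vert h.symm
        exact ⟨((hadj x hx y hy).mp h).1, hx, hy, ((hadj x hx y hy).mp h).2⟩
      · rintro ⟨hxy, hx, hy, h⟩
        exact (hadj x hx y hy).mpr ⟨hxy, h⟩

lemma isCopy_book_iff [Finite V] {H : G.Subgraph} {p : ℕ} :
    IsCopy (book p) H ↔ ∃ a b S, ∃ (hab : G.Adj a b) (hS : S ⊆ G.commonNeighbors a b),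
      S.ncard = p ∧ H = bookSubgraph hab hS := by
  rw [IsCopy, nonempty_iso_book_iff]
  constructor
  · rintro ⟨hcard, ⟨a, ha⟩, ⟨b, hb⟩, hne, hadj⟩
    simp only [Subgraph.coe_adj, ne_eq, Subtype.ext_iff] at hne hadj
    obtain ⟨hab, hS, hH⟩ :=
      exists_eq_bookSubgraph ha hb hne fun x hx y hy => hadj ⟨x, hx⟩ ⟨y, hy⟩
    refine ⟨a, b, _, hab, hS, ?_, hH⟩
    rw [Set.ncard_sdiff (by simp [Set.insert_subset_iff, ha, hb]), Set.ncard_pair hne,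
      ← Nat.card_coe_set_eq, hcard, Nat.add_sub_cancel]
  · rintro ⟨a, b, S, hab, hS, rfl, rfl⟩
    have ha : a ∉ S := fun h => (hS h).1.ne rfl
    have hb : b ∉ S := fun h => (hS h).2.ne rfl
    refine ⟨?_, ⟨a, by simp⟩, ⟨b, by simp⟩, by simpa [Subtype.ext_iff] using hab.ne,
      fun x y => ?_⟩
    · rw [Nat.card_coe_set_eq, bookSubgraph_verts,
        Set.ncard_insert_of_notMem (by simp [hab.ne, ha]), Set.ncard_insert_of_notMem hb]
    · obtain ⟨x, hx⟩ := x
      obtain ⟨y, hy⟩ := y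
      simp only [Subgraph.coe_adj, ne_eq, Subtype.ext_iff]
      exact ⟨fun h => ⟨h.1, h.2.2.2⟩, fun h => ⟨h.1, hx, hy, h.2⟩⟩

lemma not_isCopy_book_of_ncard_commonNeighbors_lt [Finite V] {p : ℕ}
    (h : ∀ a b, G.Adj a b → (G.commonNeighbors a b).ncard < p) (H : G.Subgraph) :
    ¬IsCopy (book p) H := by
  intro hH
  obtain ⟨a, b, S, hab, hS, rfl, -⟩ := isCopy_book_iff.mp hH
  exact (Set.ncard_le_ncard hS).not_gt (h a b hab)

end BookSubgraph

section AddEdge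
variable {V : Type*} {G : SimpleGraph V} {u v a b : V}

lemma commonNeighbors_sup_edge_self :
    (G ⊔ edge u v).commonNeighbors u v = G.commonNeighbors u v := by
  ext x
  simp only [mem_commonNeighbors, sup_adj, edge_adj]
  grind [SimpleGraph.irrefl]

lemma ncard_commonNeighbors_sup_edge_le [Finite V] :
    ((G ⊔ edge u v).commonNeighbors a b).ncard ≤ (G.commonNeighbors a b).ncard + 1 := by
  -- A new common neighbour is an end of `uv` whose other end is `a` or `b`.
  have hnew : ((G ⊔ edge u v).commonNeighbors a b \ G.commonNeighbors a b).Subsingleton := by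
    simp only [Set.Subsingleton, Set.mem_sdiff, mem_commonNeighbors, sup_adj, edge_adj]
    grind [SimpleGraph.irrefl]
  have := Set.ncard_le_ncard_sdiff_add_ncard ((G ⊔ edge u v).commonNeighbors a b)
    (G.commonNeighbors a b)
  have := Set.ncard_le_one_iff_subsingleton.mpr hnew
  omega

end AddEdge

section CompleteMultipartite
variable {r k : ℕ}

local notation "K" => completeMultipartiteGraph fun _ : Fin r => Fin k

lemma commonNeighbors_completeMultipartiteGraph (a b : Σ _ : Fin r, Fin k) :
    commonNeighbors K a b =
      ↑((Finset.univ \ {a.1, b.1}).sigma fun _ => (Finset.univ : Finset (Fin k))) := by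
  ext x
  simp only [mem_commonNeighbors, comap_adj, top_adj, Finset.coe_sigma, Set.mem_sigma_iff,
    Finset.coe_sdiff, Finset.coe_univ, Finset.coe_insert, Finset.coe_singleton,
    Set.mem_sdiff, Set.mem_univ, Set.mem_insert_iff, Set.mem_singleton_iff, true_and, and_true]
  tauto

lemma ncard_commonNeighbors_completeMultipartiteGraph (a b : Σ _ : Fin r, Fin k) :
    (commonNeighbors K a b).ncard = (r - Finset.card {a.1, b.1}) * k := by
  rw [commonNeighbors_completeMultipartiteGraph, Set.ncard_coe_finset, Finset.card_sigma]
  simp [Finset.card_sdiff]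

lemma ncard_commonNeighbors_completeMultipartiteGraph_of_adj {a b : Σ _ : Fin r, Fin k}
    (hab : Adj K a b) : (commonNeighbors K a b).ncard = (r - 2) * k := by
  rw [ncard_commonNeighbors_completeMultipartiteGraph, Finset.card_pair hab]

lemma ncard_commonNeighbors_completeMultipartiteGraph_add_lt {a b : Σ _ : Fin r, Fin k}
    (hab : Adj K a b) {m : ℕ} (hm : m < k) :
    (commonNeighbors K a b).ncard + m < (r - 1) * k := by
  have hr : 2 ≤ r := by
    have := Fin.val_ne_of_ne hab
    omega
  obtain ⟨s, rfl⟩ := Nat.exists_eq_add_of_le' hr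
  rw [ncard_commonNeighbors_completeMultipartiteGraph_of_adj hab, Nat.add_sub_cancel]
  show s * k + m < (s + 1) * k
  rw [add_one_mul]
  omega

theorem existsUnique_isCopy_book_completeMultipartiteGraph_sup_edge {u v : Σ _ : Fin r, Fin k}
    (hne : u ≠ v) (hnadj : ¬Adj K u v) :
    ∃! H : (K ⊔ edge u v).Subgraph, IsCopy (book ((r - 1) * k)) H := by
  have huv : u.1 = v.1 := not_not.mp hnadj
  have hk : 1 < k := by
    have : u.2 ≠ v.2 := fun h => hne (Sigma.ext huv (heq_of_eq h))
    have := Fin.val_ne_of_ne this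
    omega
  have hadj : Adj (K ⊔ edge u v) u v := Or.inr ((adj_edge u v).mpr ⟨rfl, hne⟩)
  have hcard : (commonNeighbors (K ⊔ edge u v) u v).ncard = (r - 1) * k := by
    rw [commonNeighbors_sup_edge_self, ncard_commonNeighbors_completeMultipartiteGraph, huv,
      Finset.pair_eq_singleton, Finset.card_singleton]
  refine ⟨bookSubgraph hadj subset_rfl,
    isCopy_book_iff.mpr ⟨u, v, _, hadj, subset_rfl, hcard, rfl⟩, fun H hH => ?_⟩
  obtain ⟨a, b, S, hab, hS, hSp, rfl⟩ := isCopy_book_iff.mp hH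
  by_cases hspine : s(a, b) = s(u, v)
  · refine bookSubgraph_congr hspine (Set.eq_of_subset_of_ncard_le ?_ (by rw [hcard, hSp]))
    rcases Sym2.eq_iff.mp hspine with ⟨rfl, rfl⟩ | ⟨rfl, rfl⟩
    exacts [hS, commonNeighbors_symm _ a b ▸ hS]
  · have hab' : Adj K a b :=
      hab.resolve_right fun h => hspine ((adj_edge u v).mp h).1.symm
    have := ncard_commonNeighbors_completeMultipartiteGraph_add_lt hab' hk
    have := ncard_commonNeighbors_sup_edge_le (G := K) (u := u) (v := v) (a := a) (b := b)
    have := Set.ncard_le_ncard hS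
    omega

end CompleteMultipartite

theorem stmt19_general (r k : ℕ) :
    UniquelySaturated (book ((r - 1) * k))
        (completeMultipartiteGraph fun _ : Fin r => Fin k) ∧
      ∀ G' : (completeMultipartiteGraph fun _ : Fin r => Fin k).Subgraph,
        ¬ IsCopy (book ((r - 2) * k + 1)) G' := by
  refine ⟨⟨not_isCopy_book_of_ncard_commonNeighbors_lt fun a b hab => ?_,
    fun u v hne hnadj => existsUnique_isCopy_book_completeMultipartiteGraph_sup_edge hne hnadj⟩,
    not_isCopy_book_of_ncard_commonNeighbors_lt fun a b hab => ?_⟩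
  · simpa using ncard_commonNeighbors_completeMultipartiteGraph_add_lt hab a.2.pos
  · rw [ncard_commonNeighbors_completeMultipartiteGraph_of_adj hab]
    omega

theorem stmt19 (r k : ℕ) (hr : 2 ≤ r) (hk : 1 ≤ k) :
    UniquelySaturated (book ((r - 1) * k))
        (completeMultipartiteGraph fun _ : Fin r => Fin k) ∧
      ∀ G' : (completeMultipartiteGraph fun _ : Fin r => Fin k).Subgraph,
        ¬ IsCopy (book ((r - 2) * k + 1)) G' :=
  stmt19_general r k
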